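/- Let A and H be Lie bialgebras and ω : H ⊗ A → k a skew-pairing, i.e. ω([h,g], a) = ω(h, a₁)ω(g, a₂) and ω(h, [a,b]) = ω(h₁, b)ω(h₂, a). Define h ▷ a := ω(h, a₂) a₁ and h ◁ a := ω(h₂, a) h₁. Then (A, H, ▷, ◁) is a matched pair of Lie algebras, the condition (AA1): h₁ ⊗ (h₂ ▷ a) + (h ◁ a₁) ⊗ a₂ = 0 in H ⊗ A holds, A is a left H-module Lie coalgebra (δ_A(h ▷ a) = h ▷ a₁ ⊗ a₂ + a₁ ⊗ h ▷ a₂) and H is a right A-module Lie coalgebra (δ_H(h ◁ a) = h₁ ◁ a ⊗ h₂ + h₁ ⊗ h₂ ◁ a); consequently A ⋈_ω H, the vector space A ⊕ H with bracket [(a,h),(b,g)] = ([a,b] + h ▷ b − g ▷ a, [h,g] + h ◁ b − g ◁ a) and direct sum cobracket δ(a,h) = δ_A(a) + δ_H(h), is a Lie bialgebra. -/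

import Mathlib

/-!
The actions `h ▷ a = ω(h, a₂) a₁` and `h ◁ a = ω(h₂, a) h₁` are instances of the action
`φ ⇀ x = φ(x₂) x₁` of the dual Lie algebra `L*` (bracket `(φ ⊗ ψ) ∘ δ`) on a Lie coalgebra `L`,
for `φ = ω(h, ·)` and `φ = ω(·, a)`; the skew-pairing axioms say that `h ↦ ω(h, ·)` and
`a ↦ ω(·, a)` carry brackets to dual brackets (the second with the arguments swapped).
Co-Jacobi, written in coderivation form, says that each `φ ⇀ ·` is a coderivation of `δ` and,
sliced once more, that `φ ↦ φ ⇀ ·` is a representation of `L*`: these are the module and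
module-coalgebra statements. Slicing (LB) with `ω` gives (BB1) and (BB2), and (AA1) holds because
`δ_A` is coanticommutative. In (LB) for `A ⋈_ω H` the terms mixing `A` and `H` are exactly (AA1)
and its flip.
-/

open TensorProduct

noncomputable section

variable {k : Type*} [Field k]
variable {A H : Type*} [AddCommGroup A] [Module k A] [AddCommGroup H] [Module k H]

/-- The cyclic rotation `ξ : u ⊗ v ⊗ w ↦ v ⊗ w ⊗ u` on `(L ⊗ L) ⊗ L`. -/
def ξmap (k L : Type*) [Field k] [AddCommGroup L] [Module k L] :
    ((L ⊗[k] L) ⊗[k] L) →ₗ[k] ((L ⊗[k] L) ⊗[k] L) :=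
  (TensorProduct.comm k L (L ⊗[k] L)).toLinearMap ∘ₗ (TensorProduct.assoc k L L L).toLinearMap

/-- Swap the last two tensor factors: `(m ⊗ n) ⊗ p ↦ (m ⊗ p) ⊗ n`. -/
def swapR (k M N P : Type*) [Field k] [AddCommGroup M] [Module k M] [AddCommGroup N]
    [Module k N] [AddCommGroup P] [Module k P] :
    ((M ⊗[k] N) ⊗[k] P) →ₗ[k] ((M ⊗[k] P) ⊗[k] N) :=
  (TensorProduct.assoc k M P N).symm.toLinearMap
    ∘ₗ TensorProduct.map LinearMap.id (TensorProduct.comm k N P).toLinearMap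
    ∘ₗ (TensorProduct.assoc k M N P).toLinearMap

/-- A bilinear bracket is a Lie algebra structure: antisymmetry and the Jacobi identity. -/
def IsLieAlg {L : Type*} [AddCommGroup L] [Module k L] (br : L →ₗ[k] L →ₗ[k] L) : Prop :=
  (∀ x y, br x y = - br y x) ∧
  (∀ x y z, br (br x y) z + br (br y z) x + br (br z x) y = 0)

/-- A cobracket is a Lie coalgebra structure: coanticommutativity `τ ∘ δ = −δ` and the
co-Jacobi identity `(id + ξ + ξ²) ∘ (δ ⊗ id) ∘ δ = 0`. -/
def IsLieCoalg {L : Type*} [AddCommGroup L] [Module k L] (δ : L →ₗ[k] L ⊗[k] L) : Prop :=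
  (∀ x, TensorProduct.comm k L L (δ x) = - δ x) ∧
  (∀ x, TensorProduct.map δ LinearMap.id (δ x)
      + ξmap k L (TensorProduct.map δ LinearMap.id (δ x))
      + ξmap k L (ξmap k L (TensorProduct.map δ LinearMap.id (δ x))) = 0)

/-- A Lie bialgebra: simultaneously a Lie algebra and a Lie coalgebra satisfying (LB):
`δ[x,y] = [x,y₁]⊗y₂ + y₁⊗[x,y₂] + x₁⊗[x₂,y] + [x₁,y]⊗x₂` (Sweedler notation). -/
def IsLieBialg {L : Type*} [AddCommGroup L] [Module k L]
    (br : L →ₗ[k] L →ₗ[k] L) (δ : L →ₗ[k] L ⊗[k] L) : Prop :=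
  IsLieAlg br ∧ IsLieCoalg δ ∧
  ∀ x y, δ (br x y)
      = TensorProduct.map (br x) LinearMap.id (δ y)
      + TensorProduct.map LinearMap.id (br x) (δ y)
      + TensorProduct.map LinearMap.id (br.flip y) (δ x)
      + TensorProduct.map (br.flip y) LinearMap.id (δ x)

/-- The bracket on the direct sum `A ⊕ H`:
`[(a,h),(b,g)] = ([a,b] + h▷b − g▷a + σ(h,g), [h,g] + h◁b − g◁a + θ(a,b))`. -/
def bbBracket (brA : A →ₗ[k] A →ₗ[k] A) (brH : H →ₗ[k] H →ₗ[k] H)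
    (r : H →ₗ[k] A →ₗ[k] A) (l : H →ₗ[k] A →ₗ[k] H)
    (σ : H →ₗ[k] H →ₗ[k] A) (θ : A →ₗ[k] A →ₗ[k] H) :
    (A × H) →ₗ[k] (A × H) →ₗ[k] (A × H) :=
  LinearMap.mk₂ k
    (fun x y => (brA x.1 y.1 + r x.2 y.1 - r y.2 x.1 + σ x.2 y.2,
                 brH x.2 y.2 + l x.2 y.1 - l y.2 x.1 + θ x.1 y.1))
    (fun x x' y => by
      simp only [Prod.fst_add, Prod.snd_add, map_add, LinearMap.add_apply, Prod.mk_add_mk,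
        Prod.mk.injEq]
      all_goals try (constructor <;> abel))
    (fun c x y => by
      simp only [Prod.smul_fst, Prod.smul_snd, map_smul, LinearMap.smul_apply, Prod.smul_mk,
        Prod.mk.injEq, smul_add, smul_sub]
      all_goals try (constructor <;> abel))
    (fun x y y' => by
      simp only [Prod.fst_add, Prod.snd_add, map_add, LinearMap.add_apply, Prod.mk_add_mk,
        Prod.mk.injEq]
      all_goals try (constructor <;> abel))
    (fun c x y => by
      simp only [Prod.smul_fst, Prod.smul_snd, map_smul, LinearMap.smul_apply, Prod.smul_mk,
        Prod.mk.injEq, smul_add, smul_sub]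
      all_goals try (constructor <;> abel))

/-- The cobracket on the direct sum `A ⊕ H`:
`δ_D(a) = δ_A(a) + φ(a) − τφ(a) + P(a)` and `δ_D(h) = δ_H(h) + ψ(h) − τψ(h) + Q(h)`,
all terms viewed inside `(A ⊕ H) ⊗ (A ⊕ H)`. -/
def bbCobracket (δA : A →ₗ[k] A ⊗[k] A) (δH : H →ₗ[k] H ⊗[k] H)
    (φ : A →ₗ[k] H ⊗[k] A) (ψ : H →ₗ[k] H ⊗[k] A)
    (P : A →ₗ[k] H ⊗[k] H) (Q : H →ₗ[k] A ⊗[k] A) :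
    (A × H) →ₗ[k] (A × H) ⊗[k] (A × H) :=
  (TensorProduct.map (LinearMap.inl k A H) (LinearMap.inl k A H) ∘ₗ δA
    + TensorProduct.map (LinearMap.inr k A H) (LinearMap.inl k A H) ∘ₗ φ
    - TensorProduct.map (LinearMap.inl k A H) (LinearMap.inr k A H)
        ∘ₗ (TensorProduct.comm k H A).toLinearMap ∘ₗ φ
    + TensorProduct.map (LinearMap.inr k A H) (LinearMap.inr k A H) ∘ₗ P) ∘ₗ LinearMap.fst k A H
  + (TensorProduct.map (LinearMap.inr k A H) (LinearMap.inr k A H) ∘ₗ δH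
    + TensorProduct.map (LinearMap.inr k A H) (LinearMap.inl k A H) ∘ₗ ψ
    - TensorProduct.map (LinearMap.inl k A H) (LinearMap.inr k A H)
        ∘ₗ (TensorProduct.comm k H A).toLinearMap ∘ₗ ψ
    + TensorProduct.map (LinearMap.inl k A H) (LinearMap.inl k A H) ∘ₗ Q) ∘ₗ LinearMap.snd k A H

/-- The right action `h ◁ a := ω(h₂, a) h₁` defined from a pairing `ω` and the cobracket of
`H` (Sweedler notation `δ_H h = h₁ ⊗ h₂`). -/
def pairingLact (δH : H →ₗ[k] H ⊗[k] H) (ω : H →ₗ[k] A →ₗ[k] k) : H →ₗ[k] A →ₗ[k] H :=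
  LinearMap.mk₂ k
    (fun h a => TensorProduct.rid k H
      (TensorProduct.map LinearMap.id (ω.flip a) (δH h)))
    (fun h h' a => by simp [map_add])
    (fun c h a => by simp [map_smul])
    (fun h a a' => by simp [map_add, TensorProduct.map_add_right])
    (fun c h a => by simp [map_smul, TensorProduct.map_smul_right])

/-- The left action `h ▷ a := ω(h, a₂) a₁` defined from a pairing `ω` and the cobracket of
`A` (Sweedler notation `δ_A a = a₁ ⊗ a₂`). -/
def pairingRact (δA : A →ₗ[k] A ⊗[k] A) (ω : H →ₗ[k] A →ₗ[k] k) : H →ₗ[k] A →ₗ[k] A :=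
  LinearMap.mk₂ k
    (fun h a => TensorProduct.rid k A
      (TensorProduct.map LinearMap.id (ω h) (δA a)))
    (fun h h' a => by simp [map_add, TensorProduct.map_add_right])
    (fun c h a => by simp [map_smul, TensorProduct.map_smul_right])
    (fun h a a' => by simp [map_add])
    (fun c h a => by simp [map_smul])

namespace TensorProduct

variable {M N P Q : Type*} [AddCommGroup M] [Module k M] [AddCommGroup N] [Module k N]
  [AddCommGroup P] [Module k P] [AddCommGroup Q] [Module k Q]

lemma map_neg_left (f : M →ₗ[k] P) (g : N →ₗ[k] Q) : map (-f) g = -map f g := by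
  ext; simp [neg_tmul]

lemma map_neg_right (f : M →ₗ[k] P) (g : N →ₗ[k] Q) : map f (-g) = -map f g := by
  ext; simp [tmul_neg]

end TensorProduct

@[simp] lemma ξmap_tmul {L : Type*} [AddCommGroup L] [Module k L] (x y z : L) :
    ξmap k L ((x ⊗ₜ[k] y) ⊗ₜ[k] z) = (y ⊗ₜ[k] z) ⊗ₜ[k] x := by
  simp [ξmap]

@[simp] lemma swapR_tmul {M N P : Type*} [AddCommGroup M] [Module k M] [AddCommGroup N]
    [Module k N] [AddCommGroup P] [Module k P] (x : M) (y : N) (z : P) :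
    swapR k M N P ((x ⊗ₜ[k] y) ⊗ₜ[k] z) = (x ⊗ₜ[k] z) ⊗ₜ[k] y := by
  simp [swapR]

section RightSlice

variable {M N : Type*} [AddCommGroup M] [Module k M] [AddCommGroup N] [Module k N]

def rightSlice (φ : M →ₗ[k] k) : N ⊗[k] M →ₗ[k] N :=
  (TensorProduct.rid k N).toLinearMap ∘ₗ map LinearMap.id φ

@[simp] lemma rightSlice_tmul (φ : M →ₗ[k] k) (x : N) (y : M) :
    rightSlice φ (x ⊗ₜ[k] y) = φ y • x := by
  simp [rightSlice]

lemma rightSlice_neg (φ : M →ₗ[k] k) (t : N ⊗[k] M) : rightSlice (-φ) t = -rightSlice φ t := by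
  simp [rightSlice, TensorProduct.map_neg_right]

lemma rightSlice_map_id {P : Type*} [AddCommGroup P] [Module k P] (φ : M →ₗ[k] k)
    (f : N →ₗ[k] P) (t : N ⊗[k] M) :
    rightSlice φ (map f LinearMap.id t) = f (rightSlice φ t) := by
  induction t using TensorProduct.induction_on <;> simp_all

lemma rightSlice_id_map {P : Type*} [AddCommGroup P] [Module k P] (φ : M →ₗ[k] k)
    (f : P →ₗ[k] M) (t : N ⊗[k] P) :
    rightSlice φ (map LinearMap.id f t) = rightSlice (φ ∘ₗ f) t := by
  induction t using TensorProduct.induction_on <;> simp_all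

lemma apply_rightSlice (φ : M →ₗ[k] k) (f : N →ₗ[k] k) (t : N ⊗[k] M) :
    f (rightSlice φ t) = LinearMap.mul' k k (map f φ t) := by
  induction t using TensorProduct.induction_on <;> simp_all [mul_comm]

lemma rightSlice_swapR (φ : M →ₗ[k] k) (t : (N ⊗[k] M) ⊗[k] N) :
    rightSlice φ (swapR k N M N t) = map (rightSlice φ) LinearMap.id t := by
  induction t using TensorProduct.induction_on with
  | zero => simp
  | tmul s z => induction s using TensorProduct.induction_on <;> simp_all [add_tmul, smul_tmul']
  | add u v hu hv => simp_all

lemma rightSlice_assoc_symm (φ : M →ₗ[k] k) (t : N ⊗[k] (N ⊗[k] M)) :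
    rightSlice φ ((TensorProduct.assoc k N N M).symm t) = map LinearMap.id (rightSlice φ) t := by
  induction t using TensorProduct.induction_on with
  | zero => simp
  | tmul x s => induction s using TensorProduct.induction_on <;> simp_all [tmul_add, tmul_smul]
  | add u v hu hv => simp_all

end RightSlice

section LieCoalgebra

variable {L : Type*} [AddCommGroup L] [Module k L]

lemma assoc_symm_tmul_eq_ξmap (z : L) (s : L ⊗[k] L) :
    (TensorProduct.assoc k L L L).symm (z ⊗ₜ[k] s) = ξmap k L (ξmap k L (s ⊗ₜ[k] z)) := by
  induction s using TensorProduct.induction_on <;> simp_all [add_tmul, tmul_add]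

def dualAction (δ : L →ₗ[k] L ⊗[k] L) (φ : L →ₗ[k] k) : L →ₗ[k] L := rightSlice φ ∘ₗ δ

def dualBracket (δ : L →ₗ[k] L ⊗[k] L) (φ ψ : L →ₗ[k] k) : L →ₗ[k] k :=
  LinearMap.mul' k k ∘ₗ map φ ψ ∘ₗ δ

lemma apply_dualAction (δ : L →ₗ[k] L ⊗[k] L) (φ ψ : L →ₗ[k] k) (x : L) :
    ψ (dualAction δ φ x) = dualBracket δ ψ φ x :=
  apply_rightSlice φ ψ (δ x)

variable {δ : L →ₗ[k] L ⊗[k] L}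

/-- Co-Jacobi in coderivation form: `x₁ ⊗ x₂₁ ⊗ x₂₂ = x₁₁ ⊗ x₁₂ ⊗ x₂ - x₁₁ ⊗ x₂ ⊗ x₁₂`. -/
lemma IsLieCoalg.assoc_symm_map_id_self (hδ : IsLieCoalg δ) (x : L) :
    (TensorProduct.assoc k L L L).symm (map LinearMap.id δ (δ x))
      = map δ LinearMap.id (δ x) - swapR k L L L (map δ LinearMap.id (δ x)) := by
  obtain ⟨hanti, hjac⟩ := hδ
  have hξ : ∀ t, ξmap k L (map δ LinearMap.id t)
      = -swapR k L L L (map δ LinearMap.id t) := by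
    have hτ : (TensorProduct.comm k L L).toLinearMap ∘ₗ δ = -δ := LinearMap.ext hanti
    have : ξmap k L ∘ₗ map (TensorProduct.comm k L L).toLinearMap LinearMap.id
        = swapR k L L L := by
      ext; simp
    intro t
    rw [← this, LinearMap.comp_apply, map_map, hτ, LinearMap.id_comp, TensorProduct.map_neg_left,
      LinearMap.neg_apply, map_neg, neg_neg]
  have hξξ : ∀ t, (TensorProduct.assoc k L L L).symm
        (map LinearMap.id δ (TensorProduct.comm k L L t))
      = ξmap k L (ξmap k L (map δ LinearMap.id t)) := by
    intro t
    induction t using TensorProduct.induction_on <;> simp_all [assoc_symm_tmul_eq_ξmap]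
  have := hjac x
  rw [← hξξ, hanti, hξ, map_neg, map_neg] at this
  linear_combination (norm := abel) -this

lemma IsLieCoalg.cobracket_dualAction (hδ : IsLieCoalg δ) (φ : L →ₗ[k] k) (x : L) :
    δ (dualAction δ φ x)
      = map (dualAction δ φ) LinearMap.id (δ x) + map LinearMap.id (dualAction δ φ) (δ x) := by
  have := congrArg (rightSlice φ) (hδ.assoc_symm_map_id_self x)
  rw [rightSlice_assoc_symm, map_sub, rightSlice_map_id, rightSlice_swapR, map_map, map_map,
    LinearMap.id_comp] at this
  change map LinearMap.id (dualAction δ φ) (δ x)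
    = δ (dualAction δ φ x) - map (dualAction δ φ) LinearMap.id (δ x) at this
  rw [add_comm, this, sub_add_cancel]

lemma IsLieCoalg.dualAction_dualBracket (hδ : IsLieCoalg δ) (φ ψ : L →ₗ[k] k) (x : L) :
    dualAction δ (dualBracket δ φ ψ) x
      = dualAction δ φ (dualAction δ ψ x) - dualAction δ ψ (dualAction δ φ x) := by
  have := congrArg (rightSlice φ) (hδ.cobracket_dualAction ψ x)
  rw [map_add, rightSlice_map_id, rightSlice_id_map] at this
  have hφψ : φ ∘ₗ dualAction δ ψ = dualBracket δ φ ψ := LinearMap.ext (apply_dualAction δ ψ φ)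
  rw [hφψ] at this
  change dualAction δ φ (dualAction δ ψ x)
    = dualAction δ ψ (dualAction δ φ x) + dualAction δ (dualBracket δ φ ψ) x at this
  rw [this, add_sub_cancel_left]

end LieCoalgebra

section SkewPairing

variable {brA : A →ₗ[k] A →ₗ[k] A} {δA : A →ₗ[k] A ⊗[k] A}
  {brH : H →ₗ[k] H →ₗ[k] H} {δH : H →ₗ[k] H ⊗[k] H} {ω : H →ₗ[k] A →ₗ[k] k}

lemma pairingRact_apply (h : H) (a : A) : pairingRact δA ω h a = dualAction δA (ω h) a := rfl

lemma pairingLact_apply (h : H) (a : A) : pairingLact δH ω h a = dualAction δH (ω.flip a) h := rfl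

lemma pairing_pairingLact
    (hω : ∀ h a b, ω h (brA a b) = LinearMap.mul' k k (map (ω.flip b) (ω.flip a) (δH h)))
    (h : H) (a : A) : ω (pairingLact δH ω h a) = ω h ∘ₗ brA a := by
  ext x
  exact (apply_dualAction δH (ω.flip a) (ω.flip x) h).trans (hω h a x).symm

lemma pairing_pairingRact
    (hω : ∀ h g a, ω (brH h g) a = LinearMap.mul' k k (map (ω h) (ω g) (δA a)))
    (g : H) (a : A) : ω.flip (pairingRact δA ω g a) = ω.flip a ∘ₗ brH.flip g := by
  ext x
  exact (apply_dualAction δA (ω g) (ω x) a).trans (hω x g a).symm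

lemma pairingRact_brH (hδA : IsLieCoalg δA)
    (hω : ∀ h g a, ω (brH h g) a = LinearMap.mul' k k (map (ω h) (ω g) (δA a)))
    (h g : H) (a : A) :
    pairingRact δA ω (brH h g) a
      = pairingRact δA ω h (pairingRact δA ω g a) - pairingRact δA ω g (pairingRact δA ω h a) := by
  have hbr : ω (brH h g) = dualBracket δA (ω h) (ω g) := LinearMap.ext (hω h g)
  change dualAction δA (ω (brH h g)) a = _
  rw [hbr]
  exact hδA.dualAction_dualBracket _ _ a

lemma pairingLact_brA (hδH : IsLieCoalg δH)
    (hω : ∀ h a b, ω h (brA a b) = LinearMap.mul' k k (map (ω.flip b) (ω.flip a) (δH h)))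
    (h : H) (a b : A) :
    pairingLact δH ω h (brA a b)
      = pairingLact δH ω (pairingLact δH ω h a) b - pairingLact δH ω (pairingLact δH ω h b) a := by
  have hbr : ω.flip (brA a b) = dualBracket δH (ω.flip b) (ω.flip a) :=
    LinearMap.ext fun h => hω h a b
  change dualAction δH (ω.flip (brA a b)) h = _
  rw [hbr]
  exact hδH.dualAction_dualBracket _ _ h

lemma pairingRact_brA
    (hLB : ∀ a b, δA (brA a b)
      = map (brA a) LinearMap.id (δA b) + map LinearMap.id (brA a) (δA b)
        + map LinearMap.id (brA.flip b) (δA a) + map (brA.flip b) LinearMap.id (δA a))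
    (hanti : ∀ a b, brA a b = -brA b a)
    (hω : ∀ h a b, ω h (brA a b) = LinearMap.mul' k k (map (ω.flip b) (ω.flip a) (δH h)))
    (h : H) (a b : A) :
    pairingRact δA ω h (brA a b)
      = brA (pairingRact δA ω h a) b + brA a (pairingRact δA ω h b)
        + pairingRact δA ω (pairingLact δH ω h a) b
        - pairingRact δA ω (pairingLact δH ω h b) a := by
  have hflip : ω h ∘ₗ brA.flip b = -ω (pairingLact δH ω h b) := by
    ext x
    simp [pairing_pairingLact hω, hanti x b]
  simp only [pairingRact_apply, dualAction, LinearMap.comp_apply, hLB, map_add, rightSlice_map_id,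
    rightSlice_id_map, ← pairing_pairingLact hω, hflip, rightSlice_neg, LinearMap.flip_apply]
  abel

lemma pairingLact_brH
    (hLB : ∀ h g, δH (brH h g)
      = map (brH h) LinearMap.id (δH g) + map LinearMap.id (brH h) (δH g)
        + map LinearMap.id (brH.flip g) (δH h) + map (brH.flip g) LinearMap.id (δH h))
    (hanti : ∀ h g, brH h g = -brH g h)
    (hω : ∀ h g a, ω (brH h g) a = LinearMap.mul' k k (map (ω h) (ω g) (δA a)))
    (h g : H) (a : A) :
    pairingLact δH ω (brH h g) a
      = brH h (pairingLact δH ω g a) + brH (pairingLact δH ω h a) g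
        + pairingLact δH ω h (pairingRact δA ω g a)
        - pairingLact δH ω g (pairingRact δA ω h a) := by
  have hflip : ω.flip a ∘ₗ brH h = -ω.flip (pairingRact δA ω h a) := by
    ext x
    simp [pairing_pairingRact hω, hanti h x]
  simp only [pairingLact_apply, dualAction, LinearMap.comp_apply, hLB, map_add, rightSlice_map_id,
    rightSlice_id_map, ← pairing_pairingRact hω, hflip, rightSlice_neg, LinearMap.flip_apply]
  abel

/-- Both terms equal `ω(h₂, a₂) h₁ ⊗ a₁`, up to the flip of `δ_A a`. -/
lemma map_pairingRact_add_map_pairingLact (hδA : ∀ a, TensorProduct.comm k A A (δA a) = -δA a)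
    (h : H) (a : A) :
    map LinearMap.id ((pairingRact δA ω).flip a) (δH h)
      + map (pairingLact δH ω h) LinearMap.id (δA a) = 0 := by
  let Ψ := rightSlice (TensorProduct.lift ω) ∘ₗ (tensorTensorTensorComm k H H A A).toLinearMap
  have hr : ∀ u, map LinearMap.id ((pairingRact δA ω).flip a) u = Ψ (u ⊗ₜ δA a) := by
    intro u
    induction u using TensorProduct.induction_on with
    | zero => simp
    | tmul p q =>
      change p ⊗ₜ rightSlice (ω q) (δA a) = Ψ ((p ⊗ₜ q) ⊗ₜ δA a)
      induction δA a using TensorProduct.induction_on <;>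
        simp_all [Ψ, tmul_add, tmul_smul]
    | add u v hu hv => simp_all [add_tmul]
  have hl : ∀ t, map (pairingLact δH ω h) LinearMap.id t
      = Ψ (δH h ⊗ₜ TensorProduct.comm k A A t) := by
    intro t
    induction t using TensorProduct.induction_on with
    | zero => simp
    | tmul x y =>
      change rightSlice (ω.flip x) (δH h) ⊗ₜ y = Ψ (δH h ⊗ₜ (y ⊗ₜ x))
      induction δH h using TensorProduct.induction_on <;>
        simp_all [Ψ, add_tmul, smul_tmul']
    | add u v hu hv => simp_all [tmul_add]
  rw [hr, hl, hδA, tmul_neg, map_neg, add_neg_cancel]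

end SkewPairing

/-- `r` and `l` stand for `▷` and `◁`; `act_brA` and `act_brH` are (BB1) and (BB2). -/
structure IsMatchedPair (brA : A →ₗ[k] A →ₗ[k] A) (brH : H →ₗ[k] H →ₗ[k] H)
    (r : H →ₗ[k] A →ₗ[k] A) (l : H →ₗ[k] A →ₗ[k] H) : Prop where
  left_module : ∀ h g a, r (brH h g) a = r h (r g a) - r g (r h a)
  right_module : ∀ h a b, l h (brA a b) = l (l h a) b - l (l h b) a
  act_brA : ∀ h a b, r h (brA a b) = brA (r h a) b + brA a (r h b) + r (l h a) b - r (l h b) a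
  act_brH : ∀ h g a, l (brH h g) a = brH h (l g a) + brH (l h a) g + l h (r g a) - l g (r h a)

section DoubleCrossSum

variable {brA : A →ₗ[k] A →ₗ[k] A} {brH : H →ₗ[k] H →ₗ[k] H}
  {r : H →ₗ[k] A →ₗ[k] A} {l : H →ₗ[k] A →ₗ[k] H}
  {δA : A →ₗ[k] A ⊗[k] A} {δH : H →ₗ[k] H ⊗[k] H}

@[simp] lemma bbBracket_apply (a b : A) (h g : H) :
    bbBracket brA brH r l 0 0 (a, h) (b, g)
      = (brA a b + r h b - r g a, brH h g + l h b - l g a) := by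
  simp [bbBracket]

@[simp] lemma bbCobracket_apply (a : A) (h : H) :
    bbCobracket δA δH 0 0 0 0 (a, h)
      = map (LinearMap.inl k A H) (LinearMap.inl k A H) (δA a)
        + map (LinearMap.inr k A H) (LinearMap.inr k A H) (δH h) := by
  simp [bbCobracket]

lemma IsMatchedPair.isLieAlg_bbBracket (hm : IsMatchedPair brA brH r l)
    (hA : IsLieAlg brA) (hH : IsLieAlg brH) : IsLieAlg (bbBracket brA brH r l 0 0) := by
  obtain ⟨hAanti, hAjac⟩ := hA
  obtain ⟨hHanti, hHjac⟩ := hH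
  constructor
  · rintro ⟨a, h⟩ ⟨b, g⟩
    simp only [bbBracket_apply, Prod.neg_mk, Prod.mk.injEq]
    constructor
    · linear_combination (norm := abel) hAanti a b
    · linear_combination (norm := abel) hHanti h g
  · rintro ⟨a, h⟩ ⟨b, g⟩ ⟨c, f⟩
    simp only [bbBracket_apply, map_add, map_sub, LinearMap.add_apply, LinearMap.sub_apply,
      Prod.mk_add_mk, Prod.mk_eq_zero]
    constructor
    · linear_combination (norm := abel) hAjac a b c
        + hm.left_module h g c + hm.left_module g f a + hm.left_module f h b
        - hm.act_brA f a b - hm.act_brA h b c - hm.act_brA g c a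
        - hAanti a (r f b) - hAanti b (r h c) - hAanti c (r g a)
    · linear_combination (norm := abel) hHjac h g f
        - hm.right_module f a b - hm.right_module h b c - hm.right_module g c a
        + hm.act_brH h g c + hm.act_brH g f a + hm.act_brH f h b
        + hHanti h (l g c) + hHanti g (l f a) + hHanti f (l h b)

lemma ξmap_map_map {L D : Type*} [AddCommGroup L] [Module k L] [AddCommGroup D] [Module k D]
    (f : L →ₗ[k] D) (t : (L ⊗[k] L) ⊗[k] L) :
    ξmap k D (map (map f f) f t) = map (map f f) f (ξmap k L t) := by
  induction t using TensorProduct.induction_on with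
  | zero => simp
  | tmul s z => induction s using TensorProduct.induction_on <;> simp_all [add_tmul]
  | add u v hu hv => simp_all

lemma bbCobracket_comp_inl :
    bbCobracket δA δH 0 0 0 0 ∘ₗ LinearMap.inl k A H
      = map (LinearMap.inl k A H) (LinearMap.inl k A H) ∘ₗ δA := by
  ext; simp

lemma bbCobracket_comp_inr :
    bbCobracket δA δH 0 0 0 0 ∘ₗ LinearMap.inr k A H
      = map (LinearMap.inr k A H) (LinearMap.inr k A H) ∘ₗ δH := by
  ext; simp

lemma isLieCoalg_bbCobracket (hA : IsLieCoalg δA) (hH : IsLieCoalg δH) :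
    IsLieCoalg (bbCobracket δA δH 0 0 0 0) := by
  obtain ⟨hAanti, hAjac⟩ := hA
  obtain ⟨hHanti, hHjac⟩ := hH
  constructor
  · rintro ⟨a, h⟩
    rw [bbCobracket_apply, map_add, ← map_comm, ← map_comm, hAanti, hHanti, map_neg, map_neg,
      neg_add]
  · rintro ⟨a, h⟩
    have eA := congrArg
      (map (map (LinearMap.inl k A H) (LinearMap.inl k A H)) (LinearMap.inl k A H)) (hAjac a)
    have eH := congrArg
      (map (map (LinearMap.inr k A H) (LinearMap.inr k A H)) (LinearMap.inr k A H)) (hHjac h)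
    simp only [map_add, map_zero, ← ξmap_map_map] at eA eH
    simp only [bbCobracket_apply, map_add, map_map, bbCobracket_comp_inl, bbCobracket_comp_inr,
      LinearMap.id_comp, LinearMap.comp_id] at eA eH ⊢
    have e := congrArg₂ (· + ·) eA eH
    rw [add_zero] at e
    rw [← e]
    abel

lemma bbBracket_comp_inl (a : A) (h : H) :
    bbBracket brA brH r l 0 0 (a, h) ∘ₗ LinearMap.inl k A H
      = LinearMap.inl k A H ∘ₗ brA a + LinearMap.inl k A H ∘ₗ r h
        + LinearMap.inr k A H ∘ₗ l h := by
  ext x <;> simp [bbBracket]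

lemma bbBracket_comp_inr (a : A) (h : H) :
    bbBracket brA brH r l 0 0 (a, h) ∘ₗ LinearMap.inr k A H
      = -(LinearMap.inl k A H ∘ₗ r.flip a) + LinearMap.inr k A H ∘ₗ brH h
        + -(LinearMap.inr k A H ∘ₗ l.flip a) := by
  ext x <;> simp [bbBracket, sub_eq_add_neg]

lemma bbBracket_flip_comp_inl (b : A) (g : H) :
    (bbBracket brA brH r l 0 0).flip (b, g) ∘ₗ LinearMap.inl k A H
      = LinearMap.inl k A H ∘ₗ brA.flip b + -(LinearMap.inl k A H ∘ₗ r g)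
        + -(LinearMap.inr k A H ∘ₗ l g) := by
  ext x <;> simp [bbBracket, sub_eq_add_neg]

lemma bbBracket_flip_comp_inr (b : A) (g : H) :
    (bbBracket brA brH r l 0 0).flip (b, g) ∘ₗ LinearMap.inr k A H
      = LinearMap.inl k A H ∘ₗ r.flip b + LinearMap.inr k A H ∘ₗ brH.flip g
        + LinearMap.inr k A H ∘ₗ l.flip b := by
  ext x <;> simp [bbBracket]

lemma bbCobracket_bbBracket (hA : IsLieBialg brA δA) (hH : IsLieBialg brH δH)
    (hrA : ∀ h a, δA (r h a) = map (r h) LinearMap.id (δA a) + map LinearMap.id (r h) (δA a))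
    (hlH : ∀ h a, δH (l h a)
      = map (l.flip a) LinearMap.id (δH h) + map LinearMap.id (l.flip a) (δH h))
    (hAA1 : ∀ h a, map LinearMap.id (r.flip a) (δH h) + map (l h) LinearMap.id (δA a) = 0)
    (x y : A × H) :
    bbCobracket δA δH 0 0 0 0 (bbBracket brA brH r l 0 0 x y)
      = map (bbBracket brA brH r l 0 0 x) LinearMap.id (bbCobracket δA δH 0 0 0 0 y)
        + map LinearMap.id (bbBracket brA brH r l 0 0 x) (bbCobracket δA δH 0 0 0 0 y)
        + map LinearMap.id ((bbBracket brA brH r l 0 0).flip y) (bbCobracket δA δH 0 0 0 0 x)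
        + map ((bbBracket brA brH r l 0 0).flip y) LinearMap.id (bbCobracket δA δH 0 0 0 0 x) := by
  obtain ⟨-, ⟨hAanti, -⟩, hAlb⟩ := hA
  obtain ⟨-, ⟨hHanti, -⟩, hHlb⟩ := hH
  have hAA1' : ∀ h a, map (r.flip a) LinearMap.id (δH h) + map LinearMap.id (l h) (δA a) = 0 := by
    intro h a
    have := congrArg (TensorProduct.comm k H A) (hAA1 h a)
    rwa [map_add, ← map_comm, ← map_comm, hHanti, hAanti, map_neg, map_neg, ← neg_add, map_zero,
      neg_eq_zero] at this
  obtain ⟨a, h⟩ := x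
  obtain ⟨b, g⟩ := y
  have e1 := congrArg (map (LinearMap.inr k A H) (LinearMap.inl k A H)) (hAA1 h b)
  have e2 := congrArg (map (LinearMap.inr k A H) (LinearMap.inl k A H)) (hAA1 g a)
  have e3 := congrArg (map (LinearMap.inl k A H) (LinearMap.inr k A H)) (hAA1' h b)
  have e4 := congrArg (map (LinearMap.inl k A H) (LinearMap.inr k A H)) (hAA1' g a)
  simp only [bbBracket_apply, bbCobracket_apply, map_add, map_sub, hAlb, hHlb, hrA, hlH, map_map,
    bbBracket_comp_inl, bbBracket_comp_inr, bbBracket_flip_comp_inl, bbBracket_flip_comp_inr,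
    LinearMap.id_comp, LinearMap.comp_id, map_add_left, map_add_right,
    TensorProduct.map_neg_left, TensorProduct.map_neg_right, LinearMap.add_apply,
    LinearMap.neg_apply, map_zero] at e1 e2 e3 e4 ⊢
  linear_combination (norm := abel) e2 - e1 + e4 - e3

lemma IsMatchedPair.isLieBialg_bbBracket (hm : IsMatchedPair brA brH r l)
    (hA : IsLieBialg brA δA) (hH : IsLieBialg brH δH)
    (hrA : ∀ h a, δA (r h a) = map (r h) LinearMap.id (δA a) + map LinearMap.id (r h) (δA a))
    (hlH : ∀ h a, δH (l h a)
      = map (l.flip a) LinearMap.id (δH h) + map LinearMap.id (l.flip a) (δH h))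
    (hAA1 : ∀ h a, map LinearMap.id (r.flip a) (δH h) + map (l h) LinearMap.id (δA a) = 0) :
    IsLieBialg (bbBracket brA brH r l 0 0) (bbCobracket δA δH 0 0 0 0) :=
  ⟨hm.isLieAlg_bbBracket hA.1 hH.1, isLieCoalg_bbCobracket hA.2.1 hH.2.1,
    bbCobracket_bbBracket hA hH hrA hlH hAA1⟩

end DoubleCrossSum

theorem skew_pairing_double_cross_sum_general
    (brA : A →ₗ[k] A →ₗ[k] A) (δA : A →ₗ[k] A ⊗[k] A)
    (brH : H →ₗ[k] H →ₗ[k] H) (δH : H →ₗ[k] H ⊗[k] H)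
    (ω : H →ₗ[k] A →ₗ[k] k)
    (hA : IsLieBialg brA δA) (hH : IsLieBialg brH δH)
    -- `ω` is a skew-pairing:  `ω([h,g], a) = ω(h, a₁) ω(g, a₂)`
    (hω1 : ∀ h g a, ω (brH h g) a
        = LinearMap.mul' k k (TensorProduct.map (ω h) (ω g) (δA a)))
    -- and `ω(h, [a,b]) = ω(h₁, b) ω(h₂, a)`
    (hω2 : ∀ h a b, ω h (brA a b)
        = LinearMap.mul' k k (TensorProduct.map (ω.flip b) (ω.flip a) (δH h))) :
    let r := pairingRact δA ω
    let l := pairingLact δH ω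
    -- `A` is a left `H`-module
    (∀ h g a, r (brH h g) a = r h (r g a) - r g (r h a)) ∧
    -- `H` is a right `A`-module
    (∀ h a b, l h (brA a b) = l (l h a) b - l (l h b) a) ∧
    -- (BB1)
    (∀ h a b, r h (brA a b)
        = brA (r h a) b + brA a (r h b) + r (l h a) b - r (l h b) a) ∧
    -- (BB2)
    (∀ h g a, l (brH h g) a
        = brH h (l g a) + brH (l h a) g + l h (r g a) - l g (r h a)) ∧
    -- (AA1) : `h₁ ⊗ (h₂ ▷ a) + (h ◁ a₁) ⊗ a₂ = 0` in `H ⊗ A`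
    (∀ h a, TensorProduct.map LinearMap.id (r.flip a) (δH h)
        + TensorProduct.map (l h) LinearMap.id (δA a) = 0) ∧
    -- `A` is a left `H`-module Lie coalgebra
    (∀ h a, δA (r h a)
        = TensorProduct.map (r h) LinearMap.id (δA a)
        + TensorProduct.map LinearMap.id (r h) (δA a)) ∧
    -- `H` is a right `A`-module Lie coalgebra
    (∀ h a, δH (l h a)
        = TensorProduct.map (l.flip a) LinearMap.id (δH h)
        + TensorProduct.map LinearMap.id (l.flip a) (δH h)) ∧
    -- `A ⋈_ω H` is a Lie bialgebra
    IsLieBialg (bbBracket brA brH r l 0 0) (bbCobracket δA δH 0 0 0 0) := by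
  intro r l
  have hm : IsMatchedPair brA brH r l :=
    ⟨pairingRact_brH hA.2.1 hω1, pairingLact_brA hH.2.1 hω2,
      pairingRact_brA hA.2.2 hA.1.1 hω2, pairingLact_brH hH.2.2 hH.1.1 hω1⟩
  have hAA1 : ∀ h a, map LinearMap.id (r.flip a) (δH h) + map (l h) LinearMap.id (δA a) = 0 :=
    map_pairingRact_add_map_pairingLact hA.2.1.1
  have hrA : ∀ h a, δA (r h a) = map (r h) LinearMap.id (δA a) + map LinearMap.id (r h) (δA a) :=
    fun h a => hA.2.1.cobracket_dualAction (ω h) a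
  have hlH : ∀ h a, δH (l h a)
      = map (l.flip a) LinearMap.id (δH h) + map LinearMap.id (l.flip a) (δH h) :=
    fun h a => hH.2.1.cobracket_dualAction (ω.flip a) h
  exact ⟨hm.left_module, hm.right_module, hm.act_brA, hm.act_brH, hAA1, hrA, hlH,
    hm.isLieBialg_bbBracket hA hH hrA hlH hAA1⟩

/-- For a skew-pairing `ω` between Lie bialgebras, the actions
`h ▷ a := ω(h, a₂) a₁` and `h ◁ a := ω(h₂, a) h₁` form a matched pair of Lie algebras,
(AA1) holds, `A` is a left `H`-module Lie coalgebra, `H` is a right `A`-module Lie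
coalgebra, and consequently `A ⋈_ω H` is a Lie bialgebra. -/
theorem skew_pairing_double_cross_sum [CharZero k]
    (brA : A →ₗ[k] A →ₗ[k] A) (δA : A →ₗ[k] A ⊗[k] A)
    (brH : H →ₗ[k] H →ₗ[k] H) (δH : H →ₗ[k] H ⊗[k] H)
    (ω : H →ₗ[k] A →ₗ[k] k)
    (hA : IsLieBialg brA δA) (hH : IsLieBialg brH δH)
    -- `ω` is a skew-pairing:  `ω([h,g], a) = ω(h, a₁) ω(g, a₂)`
    (hω1 : ∀ h g a, ω (brH h g) a
        = LinearMap.mul' k k (TensorProduct.map (ω h) (ω g) (δA a)))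
    -- and `ω(h, [a,b]) = ω(h₁, b) ω(h₂, a)`
    (hω2 : ∀ h a b, ω h (brA a b)
        = LinearMap.mul' k k (TensorProduct.map (ω.flip b) (ω.flip a) (δH h))) :
    let r := pairingRact δA ω
    let l := pairingLact δH ω
    -- `A` is a left `H`-module
    (∀ h g a, r (brH h g) a = r h (r g a) - r g (r h a)) ∧
    -- `H` is a right `A`-module
    (∀ h a b, l h (brA a b) = l (l h a) b - l (l h b) a) ∧
    -- (BB1)
    (∀ h a b, r h (brA a b)
        = brA (r h a) b + brA a (r h b) + r (l h a) b - r (l h b) a) ∧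
    -- (BB2)
    (∀ h g a, l (brH h g) a
        = brH h (l g a) + brH (l h a) g + l h (r g a) - l g (r h a)) ∧
    -- (AA1) : `h₁ ⊗ (h₂ ▷ a) + (h ◁ a₁) ⊗ a₂ = 0` in `H ⊗ A`
    (∀ h a, TensorProduct.map LinearMap.id (r.flip a) (δH h)
        + TensorProduct.map (l h) LinearMap.id (δA a) = 0) ∧
    -- `A` is a left `H`-module Lie coalgebra
    (∀ h a, δA (r h a)
        = TensorProduct.map (r h) LinearMap.id (δA a)
        + TensorProduct.map LinearMap.id (r h) (δA a)) ∧
    -- `H` is a right `A`-module Lie coalgebra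
    (∀ h a, δH (l h a)
        = TensorProduct.map (l.flip a) LinearMap.id (δH h)
        + TensorProduct.map LinearMap.id (l.flip a) (δH h)) ∧
    -- `A ⋈_ω H` is a Lie bialgebra
    IsLieBialg (bbBracket brA brH r l 0 0) (bbCobracket δA δH 0 0 0 0) :=
  skew_pairing_double_cross_sum_general brA δA brH δH ω hA hH hω1 hω2

end
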